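/- With the notation of the cyclic runs setup, defining W_i := V_i / √(n p^i (1-p)), the covariance E[W_i W_j] = p^{|i-j|/2} Σ_{k=0}^{min(i,j)-1} (|i-j| + 1 + 2k) p^k, which is independent of n. -/

import Mathlib

/-
Write `V_i = ∑ₘ (X_{Aₘ} - pⁱ)`, where `Aₘ = {m, …, m + i - 1}` is a cyclic arc and
`X_A = ∏_{t ∈ A} ξₜ`. Since `ξₜ² = ξₜ`, `E[X_A X_B] = p^{|A ∪ B|}`, so the covariance of `X_A` and
`X_B` is `p^{|A ∪ B|} - p^{|A| + |B|}` and depends only on the overlap `|A ∩ B|`. By rotation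
invariance, `E[V_i V_j] = n ∑ₛ (p^{i + j - cₛ} - p^{i + j})` with `cₛ = |A₀ ∩ Bₛ|`, `Bₛ` the arc
of length `j` starting at `s`. For `i ≤ j` and `i + j ≤ n` the overlaps are `i, …, 1` for `s < i`,
then `0` on a gap, then `0, 1, …, i - 1` followed by `j - i` copies of `i` as `Bₛ` wraps around.
Summing gives `E[V_i V_j] = n pʲ (1 - p) ∑_{k < i} (j - i + 1 + 2k) pᵏ`, and dividing by
`n (1 - p) p^{(i + j)/2}` gives the formula.
-/

open MeasureTheory ProbabilityTheory Finset Fin.NatCast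

lemma ofReal_smul_dirac_add_eq_bernoulliMeasure {X : Type*} [MeasurableSpace X] (x y : X)
    {p : ℝ} (hp : p ∈ unitInterval) :
    ENNReal.ofReal p • Measure.dirac x + ENNReal.ofReal (1 - p) • Measure.dirac y
      = bernoulliMeasure x y ⟨p, hp⟩ := by
  rw [bernoulliMeasure_def, ENNReal.smul_def, ENNReal.smul_def, ENNReal.ofReal, ENNReal.ofReal,
    Real.toNNReal_of_nonneg hp.1, Real.toNNReal_of_nonneg (sub_nonneg.2 hp.2)]
  rfl

section BernoulliProduct

variable {ι : Type*} [Fintype ι] [DecidableEq ι] (p : unitInterval) (A B : Finset ι)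

lemma prod_eval_mul_prod_eval_eq_prod_ite (ω : ι → ℝ) :
    (∏ t ∈ A, ω t) * ∏ t ∈ B, ω t
      = ∏ t, (if t ∈ A then ω t else 1) * (if t ∈ B then ω t else 1) := by
  rw [prod_mul_distrib, prod_ite_mem, prod_ite_mem, univ_inter, univ_inter]

lemma integrable_prod_eval_mul_prod_eval :
    Integrable (fun ω : ι → ℝ => (∏ t ∈ A, ω t) * ∏ t ∈ B, ω t)
      (Measure.pi fun _ => Ber(1, 0, p)) := by
  simp_rw [prod_eval_mul_prod_eval_eq_prod_ite A B]
  exact Integrable.fintype_prod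
    (f := fun t x => (if t ∈ A then x else 1) * (if t ∈ B then x else 1))
    fun t => integrable_bernoulliMeasure _ _ _ _

lemma integral_prod_eval_mul_prod_eval :
    ∫ ω : ι → ℝ, (∏ t ∈ A, ω t) * ∏ t ∈ B, ω t ∂(Measure.pi fun _ => Ber(1, 0, p))
      = (p : ℝ) ^ #(A ∪ B) := by
  have hfactor (t : ι) : ∫ x, (if t ∈ A then x else 1) * (if t ∈ B then x else 1) ∂Ber(1, 0, p)
      = if t ∈ A ∪ B then (p : ℝ) else 1 := by
    rw [integral_bernoulliMeasure]
    by_cases hA : t ∈ A <;> by_cases hB : t ∈ B <;> simp [hA, hB]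
  simp_rw [prod_eval_mul_prod_eval_eq_prod_ite A B]
  rw [integral_fintype_prod_eq_prod
      (fun t x => (if t ∈ A then x else 1) * (if t ∈ B then x else 1)),
    prod_congr rfl fun t _ => hfactor t, prod_ite_mem, univ_inter, prod_const]

lemma integrable_prod_eval :
    Integrable (fun ω : ι → ℝ => ∏ t ∈ A, ω t) (Measure.pi fun _ => Ber(1, 0, p)) := by
  simpa using integrable_prod_eval_mul_prod_eval p A ∅

lemma integral_prod_eval :
    ∫ ω : ι → ℝ, ∏ t ∈ A, ω t ∂(Measure.pi fun _ => Ber(1, 0, p)) = (p : ℝ) ^ #A := by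
  simpa using integral_prod_eval_mul_prod_eval p A ∅

lemma integrable_centered_prod_eval_mul (a b : ℝ) :
    Integrable (fun ω : ι → ℝ => ((∏ t ∈ A, ω t) - a) * ((∏ t ∈ B, ω t) - b))
      (Measure.pi fun _ => Ber(1, 0, p)) := by
  simp_rw [sub_mul, mul_sub]
  exact ((integrable_prod_eval_mul_prod_eval p A B).sub
    ((integrable_prod_eval p A).mul_const b)).sub
      (((integrable_prod_eval p B).const_mul a).sub (integrable_const _))

lemma integral_centered_prod_eval_mul :
    ∫ ω : ι → ℝ, ((∏ t ∈ A, ω t) - p ^ #A) * ((∏ t ∈ B, ω t) - p ^ #B)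
        ∂(Measure.pi fun _ => Ber(1, 0, p))
      = (p : ℝ) ^ #(A ∪ B) - p ^ (#A + #B) := by
  have hA := integrable_prod_eval p A
  have hB := integrable_prod_eval p B
  have hAB := integrable_prod_eval_mul_prod_eval p A B
  simp_rw [sub_mul, mul_sub]
  rw [integral_sub, integral_sub, integral_sub, integral_mul_const, integral_const_mul,
    integral_prod_eval_mul_prod_eval, integral_prod_eval, integral_prod_eval, integral_const]
  · simp [pow_add]
  exacts [hB.const_mul _, integrable_const _, hAB, hA.mul_const _, hAB.sub (hA.mul_const _),
    (hB.const_mul _).sub (integrable_const _)]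

end BernoulliProduct

section Arc

variable {n : ℕ} [NeZero n]

def arc (m : Fin n) (i : ℕ) : Finset (Fin n) :=
  (range i).image fun l : ℕ => m + (l : Fin n)

lemma injOn_add_natCast (m : Fin n) {i : ℕ} (hi : i ≤ n) :
    Set.InjOn (fun l : ℕ => m + (l : Fin n)) (range i) := by
  intro l hl l' hl' h
  simp only [coe_range, Set.mem_Iio] at hl hl'
  simpa [Fin.val_cast_of_lt (hl.trans_le hi), Fin.val_cast_of_lt (hl'.trans_le hi)]
    using congrArg Fin.val (add_left_cancel h)

lemma prod_arc {M : Type*} [CommMonoid M] (f : Fin n → M) (m : Fin n) {i : ℕ} (hi : i ≤ n) :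
    ∏ t ∈ arc m i, f t = ∏ l ∈ range i, f (m + l) :=
  prod_image (injOn_add_natCast m hi)

lemma card_arc (m : Fin n) {i : ℕ} (hi : i ≤ n) : #(arc m i) = i := by
  rw [arc, card_image_of_injOn (injOn_add_natCast m hi), card_range]

lemma arc_add (m s : Fin n) (i : ℕ) : arc (m + s) i = (arc s i).image (m + ·) := by
  simp only [arc, image_image, Function.comp_def, add_assoc]

lemma card_arc_union_arc_add (m s : Fin n) (i j : ℕ) :
    #(arc m i ∪ arc (m + s) j) = #(arc 0 i ∪ arc s j) := by
  rw [← add_zero m, arc_add, add_zero, arc_add, ← image_union,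
    card_image_of_injective _ (add_right_injective m)]

lemma sum_sum_arc_union {M : Type*} [AddCommMonoid M] (f : ℕ → M) (i j : ℕ) :
    ∑ m : Fin n, ∑ m' : Fin n, f #(arc m i ∪ arc m' j)
      = n • ∑ s : Fin n, f #(arc 0 i ∪ arc s j) := by
  have hrotate (m : Fin n) :
      ∑ m' : Fin n, f #(arc m i ∪ arc m' j) = ∑ s : Fin n, f #(arc 0 i ∪ arc s j) :=
    (Fintype.sum_equiv (Equiv.addLeft m) _ _ fun s => by
      rw [Equiv.coe_addLeft, card_arc_union_arc_add]).symm
  simp only [hrotate, sum_const, card_univ, Fintype.card_fin]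

lemma mem_arc {j : ℕ} (hj : j ≤ n) (s x : Fin n) : x ∈ arc s j ↔ (x - s : Fin n).val < j := by
  constructor
  · intro hx
    obtain ⟨l, hl, rfl⟩ := mem_image.1 hx
    rw [mem_range] at hl
    rwa [add_sub_cancel_left, Fin.val_cast_of_lt (hl.trans_le hj)]
  · exact fun hx => mem_image.2 ⟨(x - s).val, mem_range.2 hx, by simp⟩

lemma natCast_mem_arc_iff {j l : ℕ} (hj : j ≤ n) (hl : l < n) (s : Fin n) :
    (l : Fin n) ∈ arc s j ↔ (s : ℕ) ≤ l ∧ l < s + j ∨ l + n < s + j := by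
  rw [mem_arc hj]
  rcases le_or_gt s (l : Fin n) with h | h
  · rw [Fin.coe_sub_iff_le.2 h, Fin.val_cast_of_lt hl]
    rw [Fin.le_def, Fin.val_cast_of_lt hl] at h
    omega
  · rw [Fin.coe_sub_iff_lt.2 h, Fin.val_cast_of_lt hl]
    rw [Fin.lt_def, Fin.val_cast_of_lt hl] at h
    omega

/-- Read in `{0, …, n - 1}`, the arc `arc s j` is `[s, s + j)` together with its wrapped-around
part `[0, s + j - n)`. -/
lemma card_arc_zero_inter_arc {i j : ℕ} (hi : i ≤ n) (hj : j ≤ n) (s : Fin n) :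
    #(arc 0 i ∩ arc s j) = (min i (s + j) - s) + min i (s + j - n) := by
  have hinter : arc 0 i ∩ arc s j
      = ((range i).filter fun l : ℕ => (l : Fin n) ∈ arc s j).image fun l : ℕ => (l : Fin n) := by
    have harc : arc 0 i = (range i).image fun l : ℕ => (l : Fin n) := by simp [arc]
    rw [← filter_mem_eq_inter, harc, filter_image]
  have hfilter : (range i).filter (fun l : ℕ => (l : Fin n) ∈ arc s j)
      = Ico (s : ℕ) (min i (s + j)) ∪ range (min i (s + j - n)) := by
    ext l
    simp only [mem_filter, mem_range, mem_union, mem_Ico]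
    constructor
    · rintro ⟨hl, hmem⟩
      rw [natCast_mem_arc_iff hj (hl.trans_le hi)] at hmem
      omega
    · intro h
      have hl : l < i := by omega
      refine ⟨hl, (natCast_mem_arc_iff hj (hl.trans_le hi) s).2 ?_⟩
      omega
  rw [hinter, card_image_of_injOn, hfilter, card_union_of_disjoint, Nat.card_Ico, card_range]
  · exact disjoint_left.2 fun l h h' => by simp only [mem_Ico, mem_range] at h h'; omega
  · simpa using (injOn_add_natCast (0 : Fin n) hi).mono (filter_subset _ _)

end Arc

lemma sum_range_overlap {M : Type*} [AddCommMonoid M] {n i j : ℕ} (G : ℕ → M) (hG : G 0 = 0)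
    (hij : i ≤ j) (hn : i + j ≤ n) :
    ∑ σ ∈ range n, G ((min i (σ + j) - σ) + min i (σ + j - n))
      = ∑ k ∈ range i, G (k + 1) + ∑ k ∈ range i, G k + (j - i) • G i := by
  set c : ℕ → ℕ := fun σ => (min i (σ + j) - σ) + min i (σ + j - n)
  have hsplit := sum_range_add (fun σ => G (c σ)) (i + (n - j - i)) j
  rw [show i + (n - j - i) + j = n by omega, sum_range_add] at hsplit
  have hhead : ∑ σ ∈ range i, G (c σ) = ∑ k ∈ range i, G (k + 1) := by
    rw [← sum_range_reflect]
    exact sum_congr rfl fun k hk => congrArg G (by simp only [c, mem_range] at hk ⊢; omega)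
  have hgap : ∑ σ ∈ range (n - j - i), G (c (i + σ)) = 0 :=
    sum_eq_zero fun σ hσ => (congrArg G (by simp only [c, mem_range] at hσ ⊢; omega)).trans hG
  have hwrap : ∑ k ∈ range j, G (c (i + (n - j - i) + k)) = ∑ k ∈ range j, G (min i k) :=
    sum_congr rfl fun k _ => congrArg G (by simp only [c]; omega)
  rw [hsplit, hhead, hgap, hwrap, ← add_tsub_cancel_of_le hij, sum_range_add,
    sum_congr rfl fun k hk => congrArg G (min_eq_right (mem_range.1 hk).le)]
  simp [add_assoc]

lemma sum_pow_add_pow_succ_sub_eq (p d : ℝ) (i : ℕ) :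
    ∑ k ∈ range i, (p ^ k + p ^ (k + 1)) - 2 * i * p ^ i + d * (1 - p ^ i)
      = (1 - p) * ∑ k ∈ range i, (d + 1 + 2 * k) * p ^ k := by
  induction i with
  | zero => simp
  | succ i ih =>
    rw [sum_range_succ, sum_range_succ]
    push_cast
    linear_combination ih

lemma sum_pow_overlap_eq (p d : ℝ) (i : ℕ) :
    ∑ k ∈ range i, (p ^ (i - (k + 1)) - p ^ i) + ∑ k ∈ range i, (p ^ (i - k) - p ^ i)
        + d * (1 - p ^ i)
      = (1 - p) * ∑ k ∈ range i, (d + 1 + 2 * k) * p ^ k := by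
  have h1 : ∑ k ∈ range i, p ^ (i - (k + 1)) = ∑ k ∈ range i, p ^ k := by
    rw [← sum_range_reflect]
    exact sum_congr rfl fun k hk => by congr 1; simp only [mem_range] at hk; omega
  have h2 : ∑ k ∈ range i, p ^ (i - k) = ∑ k ∈ range i, p ^ (k + 1) := by
    rw [← sum_range_reflect]
    exact sum_congr rfl fun k hk => by congr 1; simp only [mem_range] at hk; omega
  rw [sum_sub_distrib, sum_sub_distrib, h1, h2, ← sum_pow_add_pow_succ_sub_eq, sum_add_distrib]
  simp only [sum_const, card_range, nsmul_eq_mul, add_left_inj]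
  ring

section RunCount

variable {n : ℕ} [NeZero n]

def centeredRunCount (p : ℝ) (i : ℕ) (ω : Fin n → ℝ) : ℝ :=
  ∑ m : Fin n, ((∏ l ∈ range i, ω (m + (l : Fin n))) - p ^ i)

lemma centeredRunCount_eq_sum_arc (p : ℝ) {i : ℕ} (hi : i ≤ n) (ω : Fin n → ℝ) :
    centeredRunCount p i ω = ∑ m : Fin n, ((∏ t ∈ arc m i, ω t) - p ^ #(arc m i)) := by
  simp only [centeredRunCount, prod_arc _ _ hi, card_arc _ hi]

lemma integral_centeredRunCount_mul (p : unitInterval) {i j : ℕ} (hij : i ≤ j)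
    (hn : i + j ≤ n) :
    ∫ ω : Fin n → ℝ, centeredRunCount p i ω * centeredRunCount p j ω
        ∂(Measure.pi fun _ => Ber(1, 0, p))
      = n * p ^ j * ((1 - p) * ∑ k ∈ range i, ((j : ℝ) - i + 1 + 2 * k) * p ^ k) := by
  have hi : i ≤ n := by omega
  have hj : j ≤ n := by omega
  set G : ℕ → ℝ := fun c => p ^ j * (p ^ (i - c) - p ^ i) with hG
  have hunion (s : Fin n) :
      (p : ℝ) ^ #(arc 0 i ∪ arc s j) - p ^ (i + j) = G #(arc 0 i ∩ arc s j) := by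
    have hcard := card_union_add_card_inter (arc 0 i) (arc s j)
    have hle : #(arc 0 i ∩ arc s j) ≤ #(arc 0 i) := card_le_card inter_subset_left
    rw [card_arc 0 hi, card_arc s hj] at hcard
    rw [card_arc 0 hi] at hle
    rw [hG, show #(arc 0 i ∪ arc s j) = (i - #(arc 0 i ∩ arc s j)) + j by omega]
    ring
  simp_rw [centeredRunCount_eq_sum_arc _ hi, centeredRunCount_eq_sum_arc _ hj, sum_mul_sum]
  rw [integral_finsetSum _ fun m _ => integrable_finsetSum _ fun m' _ =>
    integrable_centered_prod_eval_mul p _ _ _ _]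
  simp_rw [integral_finsetSum _ fun m' _ => integrable_centered_prod_eval_mul p _ _ _ _,
    integral_centered_prod_eval_mul, card_arc _ hi, card_arc _ hj]
  rw [sum_sum_arc_union (fun c => (p : ℝ) ^ c - p ^ (i + j)), nsmul_eq_mul]
  simp only [hunion, card_arc_zero_inter_arc hi hj]
  rw [Fin.sum_univ_eq_sum_range (fun σ => G (min i (σ + j) - σ + min i (σ + j - n))),
    sum_range_overlap G (by simp [hG]) hij hn, ← sum_pow_overlap_eq, ← Nat.cast_sub hij]
  simp only [hG, Nat.sub_self, pow_zero, nsmul_eq_mul, ← mul_sum]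
  ring

end RunCount

lemma sqrt_mul_sqrt_mul_rpow {a b p : ℝ} (ha : 0 ≤ a) (hb : 0 ≤ b) (hp : 0 < p) (i j : ℕ) :
    √(a * p ^ i * b) * √(a * p ^ j * b) * p ^ (((j : ℝ) - i) / 2) = a * p ^ j * b := by
  have hsqrt (k : ℕ) : √(a * p ^ k * b) = √(a * b) * p ^ ((k : ℝ) / 2) := by
    rw [mul_right_comm, Real.sqrt_mul (by positivity), Real.sqrt_eq_rpow (p ^ k),
      ← Real.rpow_natCast, ← Real.rpow_mul hp.le, mul_one_div]
  rw [hsqrt, hsqrt, mul_mul_mul_comm, Real.mul_self_sqrt (by positivity), mul_assoc,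
    ← Real.rpow_add hp, ← Real.rpow_add hp,
    show (i : ℝ) / 2 + j / 2 + (j - i) / 2 = (j : ℕ) by ring, Real.rpow_natCast]
  ring

theorem runs_standardized_covariance_general
    (n i j : ℕ) [NeZero n] (hn : 2 * max i j ≤ n)
    (p : ℝ) (hp0 : 0 < p) (hp1 : p < 1) :
    ∫ ω : Fin n → ℝ,
        ((∑ m : Fin n, ((∏ l ∈ Finset.range i, ω (m + (l : Fin n))) - p ^ i)) /
            Real.sqrt (n * p ^ i * (1 - p))) *
        ((∑ m : Fin n, ((∏ l ∈ Finset.range j, ω (m + (l : Fin n))) - p ^ j)) /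
            Real.sqrt (n * p ^ j * (1 - p)))
      ∂(Measure.pi fun _ : Fin n =>
          ENNReal.ofReal p • Measure.dirac (1 : ℝ) + ENNReal.ofReal (1 - p) • Measure.dirac 0)
    = p ^ (|(i : ℝ) - (j : ℝ)| / 2) *
        ∑ k ∈ Finset.range (min i j), (|(i : ℝ) - (j : ℝ)| + 1 + 2 * (k : ℝ)) * p ^ k := by
  wlog hij : i ≤ j generalizing i j
  · rw [abs_sub_comm, min_comm]
    simp_rw [mul_comm (_ / Real.sqrt (n * p ^ i * (1 - p)))]
    exact this j i (max_comm i j ▸ hn) (by omega)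
  have hp : p ∈ unitInterval := ⟨hp0.le, hp1.le⟩
  have hcov := integral_centeredRunCount_mul (n := n) ⟨p, hp⟩ hij (by omega)
  have hnorm := sqrt_mul_sqrt_mul_rpow (Nat.cast_nonneg n) (sub_nonneg.2 hp1.le) hp0 i j
  have hsqrt : Real.sqrt (n * p ^ i * (1 - p)) * Real.sqrt (n * p ^ j * (1 - p)) ≠ 0 := by
    have : (0 : ℝ) < n := Nat.cast_pos.2 (Nat.pos_of_ne_zero (NeZero.ne n))
    have : 0 < 1 - p := sub_pos.2 hp1
    positivity
  rw [abs_sub_comm, abs_of_nonneg (sub_nonneg.2 (Nat.cast_le.2 hij)), min_eq_left hij,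
    ofReal_smul_dirac_add_eq_bernoulliMeasure 1 0 hp]
  simp_rw [div_mul_div_comm]
  rw [integral_div, div_eq_iff hsqrt]
  refine hcov.trans ?_
  linear_combination (-∑ k ∈ range i, ((j : ℝ) - i + 1 + 2 * k) * p ^ k) * hnorm

/-- With `W_i = V_i / √(n p^i (1-p))` the standardized centered number of i-runs
in the cyclic Bernoulli setup,
`E[W_i W_j] = p^{|i-j|/2} ∑_{k=0}^{min(i,j)-1} (|i-j| + 1 + 2k) p^k`, independent of `n`. -/
theorem runs_standardized_covariance
    (n i j : ℕ) [NeZero n] (hi : 1 ≤ i) (hj : 1 ≤ j) (hn : 2 * max i j ≤ n)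
    (p : ℝ) (hp0 : 0 < p) (hp1 : p < 1) :
    ∫ ω : Fin n → ℝ,
        ((∑ m : Fin n, ((∏ l ∈ Finset.range i, ω (m + (l : Fin n))) - p ^ i)) /
            Real.sqrt (n * p ^ i * (1 - p))) *
        ((∑ m : Fin n, ((∏ l ∈ Finset.range j, ω (m + (l : Fin n))) - p ^ j)) /
            Real.sqrt (n * p ^ j * (1 - p)))
      ∂(Measure.pi fun _ : Fin n =>
          ENNReal.ofReal p • Measure.dirac (1 : ℝ) + ENNReal.ofReal (1 - p) • Measure.dirac 0)
    = p ^ (|(i : ℝ) - (j : ℝ)| / 2) *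
        ∑ k ∈ Finset.range (min i j), (|(i : ℝ) - (j : ℝ)| + 1 + 2 * (k : ℝ)) * p ^ k :=
  runs_standardized_covariance_general n i j hn p hp0 hp1
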